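/- arXiv:1611.01654 — 6 statements merged into one kernel-verified Lean document; each statement's English description precedes it below -/
import Mathlib

section
/- Let A and B be abelian categories, let (L₁, R₁) and (L₂, R₂) be adjunctions from B to A, and let σ : L₁ ⟶ L₂ and τ : R₂ ⟶ R₁ be conjugate natural transformations. Then the functor Ker τ : A ⥤ B (sending A to the kernel of τ_A) is right adjoint to the functor Coker σ : B ⥤ A (sending B to the cokernel of σ_B). -/
open CategoryTheory Category Limits

section

variable {A B : Type*} [Category A] [Category B] [Abelian A] [Abelian B]
variable {L₁ L₂ : B ⥤ A} {R₁ R₂ : A ⥤ B}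

/-- The functor `B ⥤ A` sending `X` to the cokernel of `σ.app X`. -/
noncomputable def cokerFunctor (σ : L₁ ⟶ L₂) : B ⥤ A where
  obj X := cokernel (σ.app X)
  map {X Y} f := cokernel.map (σ.app X) (σ.app Y) (L₁.map f) (L₂.map f) (σ.naturality f).symm
  map_id X := by
    apply coequalizer.hom_ext
    simp
  map_comp f g := by
    apply coequalizer.hom_ext
    simp

/-- The functor `A ⥤ B` sending `X` to the kernel of `τ.app X`. -/
noncomputable def kerFunctor (τ : R₂ ⟶ R₁) : A ⥤ B where
  obj X := kernel (τ.app X)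
  map {X Y} f := kernel.map (τ.app X) (τ.app Y) (R₂.map f) (R₁.map f) (τ.naturality f).symm
  map_id X := by
    apply equalizer.hom_ext
    simp
  map_comp f g := by
    apply equalizer.hom_ext
    simp

/-- If `(L₁, R₁)` and `(L₂, R₂)` are adjunctions between abelian
categories `B` and `A`, and `σ : L₁ ⟶ L₂`, `τ : R₂ ⟶ R₁` are conjugate natural
transformations, then the pointwise kernel functor of `τ` is right adjoint to
the pointwise cokernel functor of `σ`. -/
theorem cokerFunctor_adj_kerFunctor
    (adj₁ : L₁ ⊣ R₁) (adj₂ : L₂ ⊣ R₂) (σ : L₁ ⟶ L₂) (τ : R₂ ⟶ R₁)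
    (conj : ∀ (X : B) (Y : A) (f : L₂.obj X ⟶ Y),
      adj₁.homEquiv X Y (σ.app X ≫ f) = adj₂.homEquiv X Y f ≫ τ.app Y) :
    Nonempty (cokerFunctor σ ⊣ kerFunctor τ) := by
  haveI : R₁.IsRightAdjoint := ⟨L₁, ⟨adj₁⟩⟩
  refine ⟨Adjunction.mkOfHomEquiv
    { homEquiv := fun X Y =>
        { toFun := fun (h : cokernel (σ.app X) ⟶ Y) => kernel.lift (τ.app Y)
            (adj₂.homEquiv X Y (cokernel.π (σ.app X) ≫ h)) (by
              rw [← conj, ← assoc, cokernel.condition, zero_comp,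
                Adjunction.homEquiv_unit]
              simp)
          invFun := fun (g : X ⟶ kernel (τ.app Y)) => cokernel.desc (σ.app X)
            ((adj₂.homEquiv X Y).symm (g ≫ kernel.ι (τ.app Y))) (by
              apply (adj₁.homEquiv X Y).injective
              rw [conj, Equiv.apply_symm_apply, assoc, kernel.condition,
                comp_zero, Adjunction.homEquiv_unit]
              simp)
          left_inv := fun (h : cokernel (σ.app X) ⟶ Y) => by
            apply coequalizer.hom_ext
            simp
          right_inv := fun (g : X ⟶ kernel (τ.app Y)) => by
            apply equalizer.hom_ext
            simp }
      homEquiv_naturality_left_symm := fun {X' X Y} f g => by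
        apply coequalizer.hom_ext
        dsimp only [DFunLike.coe, EquivLike.coe, Equiv.symm, Equiv.instEquivLike]
        dsimp [cokerFunctor]
        simp only [assoc, cokernel.π_desc, cokernel.π_desc_assoc]
        exact (congrArg (adj₂.homEquiv X' Y).symm (assoc f g (kernel.ι (τ.app Y)))).trans
          (adj₂.homEquiv_naturality_left_symm f (g ≫ kernel.ι (τ.app Y)))
      homEquiv_naturality_right := fun {X Y Y'} h f => by
        apply equalizer.hom_ext
        dsimp only [DFunLike.coe, EquivLike.coe, Equiv.symm, Equiv.instEquivLike]
        dsimp [kerFunctor]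
        simp only [assoc, kernel.lift_ι, kernel.lift_ι_assoc]
        exact (congrArg (adj₂.homEquiv X Y') (assoc (cokernel.π (σ.app X)) h f).symm).trans
          (adj₂.homEquiv_naturality_right (cokernel.π (σ.app X) ≫ h) f) }⟩

end
end

section
/- Let S = (S, ε, Δ) be a comonad on an abelian category A such that the image of S is a generating subcategory of A. Let G : A ⥤ B be a right exact functor to an abelian category B. If S and G∘S are exact functors, then the image of S is adapted to G; that is, for every exact sequence ⋯ → X₂ → X₁ → X₀ → 0 with all X_i in the image of S, the sequence ⋯ → G(X₂) → G(X₁) → G(X₀) → 0 is exact. -/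
open CategoryTheory Category Limits

namespace ComonadAdaptedAux

variable {A B : Type*} [Category A] [Category B] [Abelian A] [Abelian B]

lemma exact_congr {C' : Type*} [Category C'] [Limits.HasZeroMorphisms C']
    {X₁ X₂ X₃ : C'} {f f' : X₁ ⟶ X₂} {g g' : X₂ ⟶ X₃} {z : f ≫ g = 0} {z' : f' ≫ g' = 0}
    (hf : f = f') (hg : g = g') :
    (ShortComplex.mk f g z).Exact ↔ (ShortComplex.mk f' g' z').Exact := by
  subst hf; subst hg; rfl

/-- If `X` is a retract of a cofree object, the counit at `X` has a section. -/
lemma counit_section (S : Comonad A) {X Z : A} (s : X ⟶ S.toFunctor.obj Z)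
    (r : S.toFunctor.obj Z ⟶ X) (hsr : s ≫ r = 𝟙 X) :
    ∃ σ : X ⟶ S.toFunctor.obj X, σ ≫ S.ε.app X = 𝟙 X := by
  refine ⟨s ≫ S.δ.app Z ≫ S.toFunctor.map r, ?_⟩
  have h := S.ε.naturality r
  simp only [Functor.id_map] at h
  rw [assoc, assoc, h, Comonad.left_counit_assoc, hsr]

/-- An exact functor preserves exactness of homological complexes. -/
lemma exactAt_map_of_exact {ι : Type*} {c : ComplexShape ι} (F : A ⥤ B) [F.Additive]
    [PreservesFiniteLimits F] [PreservesFiniteColimits F]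
    (C : HomologicalComplex A c) (n : ι) (h : C.ExactAt n) :
    ((F.mapHomologicalComplex c).obj C).ExactAt n := by
  rw [HomologicalComplex.exactAt_iff] at h ⊢
  have h' := h.map F
  exact ShortComplex.exact_of_iso
    (ShortComplex.isoMk (Iso.refl _) (Iso.refl _) (Iso.refl _) (by exact (id_comp _).trans (comp_id _).symm)
      (by exact (id_comp _).trans (comp_id _).symm)) h'

lemma adapted_aux (S : Comonad A) (G : A ⥤ B) [G.Additive]
    [PreservesFiniteColimits G]
    [PreservesFiniteLimits S.toFunctor] [PreservesFiniteColimits S.toFunctor]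
    [PreservesFiniteLimits (S.toFunctor ⋙ G)] [PreservesFiniteColimits (S.toFunctor ⋙ G)]
    (n : ℕ) :
    ∀ (C : ChainComplex A ℕ)
      (_ : ∀ k, ∃ (Z : A) (s : C.X k ⟶ S.toFunctor.obj Z) (r : S.toFunctor.obj Z ⟶ C.X k),
        s ≫ r = 𝟙 (C.X k))
      (_ : ∀ k, C.ExactAt k),
      ((G.mapHomologicalComplex (ComplexShape.down ℕ)).obj C).ExactAt n := by
  haveI : S.toFunctor.Additive := Functor.additive_of_preserves_binary_products _
  haveI : (S.toFunctor ⋙ G).Additive := Functor.additive_of_preserves_binary_products _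
  induction n with
  | zero =>
    intro C hP hC
    have hrel : ¬ (ComplexShape.down ℕ).Rel 0 0 := by simp
    have h0 := hC 0
    rw [HomologicalComplex.exactAt_iff' _ 1 0 0 (ChainComplex.prev ℕ 0) ChainComplex.next_nat_zero,
      ShortComplex.exact_iff_epi _ (C.shape 0 0 hrel)] at h0
    rw [HomologicalComplex.exactAt_iff' _ 1 0 0 (ChainComplex.prev ℕ 0) ChainComplex.next_nat_zero,
      ShortComplex.exact_iff_epi _ (((G.mapHomologicalComplex (ComplexShape.down ℕ)).obj C).shape 0 0 hrel)]
    haveI : Epi (C.d (0 + 1) 0) := h0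
    show Epi (G.map (C.d (0 + 1) 0))
    exact G.map_epi _
  | succ n ih =>
    intro C hP hC
    -- sections of the counit at each `C.X k`
    have hσ' : ∀ k : ℕ, ∃ σ : C.X k ⟶ S.toFunctor.obj (C.X k), σ ≫ S.ε.app (C.X k) = 𝟙 _ := by
      intro k
      obtain ⟨Z, s, r, hsr⟩ := hP k
      exact counit_section S s r hsr
    choose σ hσ using hσ'
    set SC : ChainComplex A ℕ := (S.toFunctor.mapHomologicalComplex _).obj C with hSCdef
    -- the kernel complex
    let K : ChainComplex A ℕ := ChainComplex.of
      (fun k => kernel (S.ε.app (C.X k)))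
      (fun k => kernel.map _ _ (S.toFunctor.map (C.d (k + 1) k)) (C.d (k + 1) k)
        (by simpa using (S.ε.naturality (C.d (k + 1) k)).symm))
      (fun k => by
        rw [← cancel_mono (kernel.ι (S.ε.app (C.X k)))]
        simp [← Functor.map_comp])
    -- the chain maps
    let ιK : K ⟶ SC :=
      { f := fun k => kernel.ι (S.ε.app (C.X k))
        comm' := by
          intro i j hij
          obtain rfl : i = j + 1 := (show j + 1 = i from hij).symm
          show kernel.ι _ ≫ S.toFunctor.map (C.d (j + 1) j) = K.d (j + 1) j ≫ kernel.ι _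
          rw [show K.d (j + 1) j = _ from ChainComplex.of_d (fun k => kernel (S.ε.app (C.X k)))
            (fun k => kernel.map _ _ (S.toFunctor.map (C.d (k + 1) k)) (C.d (k + 1) k)
              (by simpa using (S.ε.naturality (C.d (k + 1) k)).symm)) j]
          simp }
    let φ : SC ⟶ C :=
      { f := fun k => S.ε.app (C.X k)
        comm' := by
          intro i j _
          show S.ε.app (C.X i) ≫ C.d i j = S.toFunctor.map (C.d i j) ≫ S.ε.app (C.X j)
          simpa using (S.ε.naturality (C.d i j)).symm }
    have hzero : ιK ≫ φ = 0 := by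
      ext k
      simp [ιK, φ]
      exact kernel.condition _
    let Sses : ShortComplex (HomologicalComplex A (ComplexShape.down ℕ)) :=
      ShortComplex.mk ιK φ hzero
    -- degreewise splittings
    have rwd : ∀ k : ℕ, (𝟙 (S.toFunctor.obj (C.X k)) - S.ε.app (C.X k) ≫ σ k) ≫
        S.ε.app (C.X k) = 0 := by
      intro k
      simp [Preadditive.sub_comp, assoc, hσ k]
    let spl : ∀ k : ℕ, (Sses.map (HomologicalComplex.eval A _ k)).Splitting := fun k =>
      { r := (kernel.lift _ (𝟙 _ - S.ε.app (C.X k) ≫ σ k) (rwd k) :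
          S.toFunctor.obj (C.X k) ⟶ kernel (S.ε.app (C.X k)))
        s := σ k
        f_r := by
          show kernel.ι (S.ε.app (C.X k)) ≫ _ = 𝟙 _
          rw [← cancel_mono (kernel.ι (S.ε.app (C.X k))), assoc, kernel.lift_ι, id_comp,
            Preadditive.comp_sub, comp_id, kernel.condition_assoc, zero_comp, sub_zero]
        s_g := hσ k
        id := by
          show kernel.lift _ _ (rwd k) ≫ kernel.ι _ + S.ε.app (C.X k) ≫ σ k = 𝟙 _
          rw [kernel.lift_ι, sub_add_cancel] }
    have hSsesA : Sses.ShortExact :=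
      HomologicalComplex.shortExact_of_degreewise_shortExact _ (fun k => (spl k).shortExact)
    let SB := Sses.map (G.mapHomologicalComplex (ComplexShape.down ℕ))
    have hSB : SB.ShortExact :=
      HomologicalComplex.shortExact_of_degreewise_shortExact _
        (fun k => ((spl k).map G).shortExact)
    -- acyclicity of `SC` and `G(SC)`
    have hSCex : ∀ k, SC.ExactAt k := fun k => exactAt_map_of_exact S.toFunctor C k (hC k)
    have hGSC : ∀ k, ((G.mapHomologicalComplex (ComplexShape.down ℕ)).obj SC).ExactAt k := by
      intro k
      exact exactAt_map_of_exact (S.toFunctor ⋙ G) C k (hC k)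
    -- hypotheses for `K`
    have hPK : ∀ k, ∃ (Z : A) (s : K.X k ⟶ S.toFunctor.obj Z) (r : S.toFunctor.obj Z ⟶ K.X k),
        s ≫ r = 𝟙 (K.X k) := by
      intro k
      refine ⟨C.X k, kernel.ι (S.ε.app (C.X k)),
        kernel.lift _ (𝟙 _ - S.ε.app (C.X k) ≫ σ k) (rwd k), ?_⟩
      rw [← cancel_mono (kernel.ι (S.ε.app (C.X k))), assoc, kernel.lift_ι, id_comp,
        Preadditive.comp_sub, comp_id, kernel.condition_assoc, zero_comp, sub_zero]
    have hKex : ∀ k, K.ExactAt k := by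
      intro k
      rw [HomologicalComplex.exactAt_iff_isZero_homology]
      have e1 := hSsesA.homology_exact₁ (k + 1) k rfl
      have hf : hSsesA.δ (k + 1) k rfl = 0 :=
        ((HomologicalComplex.exactAt_iff_isZero_homology _ _).1 (hC (k + 1))).eq_of_src _ _
      haveI := e1.mono_g hf
      exact IsZero.of_mono_eq_zero (HomologicalComplex.homologyMap Sses.f k)
        (((HomologicalComplex.exactAt_iff_isZero_homology _ _).1 (hSCex k)).eq_of_tgt _ _)
    -- conclusion via the homology sequence of `SB`
    rw [HomologicalComplex.exactAt_iff_isZero_homology]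
    have e3 := hSB.homology_exact₃ (n + 1) n rfl
    have hg0 : HomologicalComplex.homologyMap SB.g (n + 1) = 0 :=
      ((HomologicalComplex.exactAt_iff_isZero_homology _ _).1 (hGSC (n + 1))).eq_of_src _ _
    haveI := e3.mono_g hg0
    have hδ : hSB.δ (n + 1) n rfl = 0 :=
      ((HomologicalComplex.exactAt_iff_isZero_homology _ _).1 (ih K hPK hKex)).eq_of_tgt _ _
    exact @IsZero.of_mono_eq_zero _ _ _ _ _ _ this hδ

end ComonadAdaptedAux

/-- Let `S = (S, ε, Δ)` be a comonad on an abelian category `A`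
whose image is generating, and let `G : A ⥤ B` be a right exact functor into an
abelian category `B`.  If `S` and `G ∘ S` are exact, then the image of `S` is
adapted to `G`: `G` preserves exactness of exact sequences
`⋯ → X₂ → X₁ → X₀ → 0` whose terms lie in the image of `S`. -/
theorem comonad_image_adapted {A B : Type*} [Category A] [Category B]
    [Abelian A] [Abelian B]
    (S : Comonad A)
    (hgen : ∀ X : A, ∃ (Y : A) (p : S.toFunctor.obj Y ⟶ X), Epi p)
    (G : A ⥤ B) [G.Additive] [PreservesFiniteColimits G]
    [PreservesFiniteLimits S.toFunctor] [PreservesFiniteColimits S.toFunctor]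
    [PreservesFiniteLimits (S.toFunctor ⋙ G)]
    [PreservesFiniteColimits (S.toFunctor ⋙ G)]
    (Y : ℕ → A)
    (d : ∀ n : ℕ, S.toFunctor.obj (Y (n + 1)) ⟶ S.toFunctor.obj (Y n))
    (w : ∀ n : ℕ, d (n + 1) ≫ d n = 0)
    (hepi : Epi (d 0))
    (hex : ∀ n : ℕ, (ShortComplex.mk (d (n + 1)) (d n) (w n)).Exact) :
    Epi (G.map (d 0)) ∧
      ∀ n : ℕ, (ShortComplex.mk (G.map (d (n + 1))) (G.map (d n))
        (by rw [← G.map_comp, w n]; exact G.map_zero _ _)).Exact := by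
  classical
  let C : ChainComplex A ℕ := ChainComplex.of (fun n => S.toFunctor.obj (Y n)) d w
  have hrel : ¬ (ComplexShape.down ℕ).Rel 0 0 := by simp
  have hP : ∀ k, ∃ (Z : A) (s : C.X k ⟶ S.toFunctor.obj Z)
      (r : S.toFunctor.obj Z ⟶ C.X k), s ≫ r = 𝟙 (C.X k) :=
    fun k => ⟨Y k, 𝟙 _, 𝟙 _, by simp⟩
  have hC : ∀ k, C.ExactAt k := by
    intro k
    match k with
    | 0 =>
      rw [HomologicalComplex.exactAt_iff' _ 1 0 0 (ChainComplex.prev ℕ 0) ChainComplex.next_nat_zero,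
        ShortComplex.exact_iff_epi _ (C.shape 0 0 hrel)]
      show Epi (C.d (0 + 1) 0)
      have e : C.d (0 + 1) 0 = d 0 := ChainComplex.of_d (fun n => S.toFunctor.obj (Y n)) d 0
      rw [e]
      exact hepi
    | (k + 1) =>
      rw [HomologicalComplex.exactAt_iff' _ (k + 2) (k + 1) k (ChainComplex.prev ℕ (k + 1))
        (ChainComplex.next_nat_succ k)]
      refine (ComonadAdaptedAux.exact_congr (f := C.d (k + 1 + 1) (k + 1))
        (g := C.d (k + 1) k) (z := C.d_comp_d _ _ _) ?_ ?_).2 (hex k)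
      · exact ChainComplex.of_d (fun n => S.toFunctor.obj (Y n)) d (k + 1)
      · exact ChainComplex.of_d (fun n => S.toFunctor.obj (Y n)) d k
  have main := fun n => ComonadAdaptedAux.adapted_aux S G n C hP hC
  constructor
  · have h0 := main 0
    rw [HomologicalComplex.exactAt_iff' _ 1 0 0 (ChainComplex.prev ℕ 0) ChainComplex.next_nat_zero,
      ShortComplex.exact_iff_epi _ (((G.mapHomologicalComplex (ComplexShape.down ℕ)).obj C).shape 0 0 hrel)] at h0
    have h0' : Epi (G.map (C.d (0 + 1) 0)) := h0
    have e : C.d (0 + 1) 0 = d 0 := ChainComplex.of_d (fun n => S.toFunctor.obj (Y n)) d 0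
    rwa [e] at h0'
  · intro n
    have hn := main (n + 1)
    rw [HomologicalComplex.exactAt_iff' _ (n + 2) (n + 1) n (ChainComplex.prev ℕ (n + 1))
      (ChainComplex.next_nat_succ n)] at hn
    refine (ComonadAdaptedAux.exact_congr ?_ ?_).1 hn
    · show G.map (C.d (n + 1 + 1) (n + 1)) = G.map (d (n + 1))
      exact congrArg G.map (ChainComplex.of_d (fun n => S.toFunctor.obj (Y n)) d (n + 1))
    · show G.map (C.d (n + 1) n) = G.map (d n)
      exact congrArg G.map (ChainComplex.of_d (fun n => S.toFunctor.obj (Y n)) d n)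
end

section
/- Let ν be a Nakayama functor relative to f_! ⊣ f^* with right adjoint ν⁻ and f_* = ν ∘ f_!. Then there is a chain of adjunctions f^* ∘ ν ⊣ f_! ⊣ f^* ⊣ f_* ⊣ f^* ∘ ν⁻. -/
open CategoryTheory Category Limits

/-- If `ν` is a Nakayama functor relative to `f_! ⊣ f^*` with right
adjoint `ν⁻` and `f_* = ν ∘ f_!`, then there is a chain of adjunctions
`f^* ∘ ν ⊣ f_! ⊣ f^* ⊣ f_* ⊣ f^* ∘ ν⁻`. -/
theorem nakayama_adjunction_chain {A D : Type*} [Category A] [Category D]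
    [Abelian A] [Preadditive D]
    (fbang : D ⥤ A) (fstar : A ⥤ D) [fstar.Faithful]
    (adj : fbang ⊣ fstar)
    (ν νinv : A ⥤ A) (adjν : ν ⊣ νinv)
    (adj2 : fstar ⊣ (fbang ⋙ ν))
    (hunit : ∀ X : D, IsIso (adjν.unit.app (fbang.obj X))) :
    Nonempty ((ν ⋙ fstar) ⊣ fbang) ∧
    Nonempty (fbang ⊣ fstar) ∧
    Nonempty (fstar ⊣ (fbang ⋙ ν)) ∧
    Nonempty ((fbang ⋙ ν) ⊣ (νinv ⋙ fstar)) := by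
  refine ⟨⟨?_⟩, ⟨adj⟩, ⟨adj2⟩, ⟨adj.comp adjν⟩⟩
  -- `adjν.comp adj2 : ν ⋙ fstar ⊣ (fbang ⋙ ν) ⋙ νinv`
  -- and `fbang ≅ (fbang ⋙ ν) ⋙ νinv` via the unit, which is an iso by `hunit`.
  haveI : ∀ X : D, IsIso ((Functor.whiskerLeft fbang adjν.unit :
      fbang ⟶ (fbang ⋙ ν) ⋙ νinv).app X) := fun X => hunit X
  haveI : IsIso (Functor.whiskerLeft fbang adjν.unit : fbang ⟶ (fbang ⋙ ν) ⋙ νinv) :=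
    NatIso.isIso_of_isIso_app _
  exact (adjν.comp adj2).ofNatIsoRight
    (asIso (Functor.whiskerLeft fbang adjν.unit : fbang ⟶ (fbang ⋙ ν) ⋙ νinv)).symm
end

section
/- Let P : A ⥤ A be a generating endofunctor of an abelian category A with Nakayama functor ν relative to P, right adjoint ν⁻, and I = ν ∘ P. Then P is a faithful functor. -/
/-!
The unit `η` of `P ⊣ I`, with `I = P ⋙ ν`, is a monomorphism, and a left adjoint whose unit is
pointwise mono is faithful. By the triangle identity `P η_Y` is split mono, so
`I η_Y = ν (P η_Y)` is mono; transposing along the adjunction, `η_Y` is then cancellable on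
morphisms out of objects `P Z`, and these cover every object by epimorphisms.
-/

open CategoryTheory

namespace CategoryTheory.Adjunction

variable {C : Type*} [Category C]

lemma isSplitMono_map_unit_app {D : Type*} [Category D] {L : C ⥤ D} {R : D ⥤ C} (adj : L ⊣ R)
    (X : C) : IsSplitMono (L.map (adj.unit.app X)) :=
  IsSplitMono.mk' ⟨adj.counit.app (L.obj X), adj.left_triangle_components X⟩

lemma mono_map_unit_app_of_right_eq_comp {L G : C ⥤ C} (adj : L ⊣ L ⋙ G) (X : C) :
    Mono ((L ⋙ G).map (adj.unit.app X)) :=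
  have := adj.isSplitMono_map_unit_app X
  inferInstanceAs (Mono (G.map (L.map _)))

lemma mono_unit_app_of_generating {L R : C ⥤ C} (adj : L ⊣ R)
    (hgen : ∀ X : C, ∃ (Y : C) (p : L.obj Y ⟶ X), Epi p)
    (hR : ∀ X, Mono (R.map (adj.unit.app X))) (Y : C) : Mono (adj.unit.app Y) where
  right_cancellation {X} f g hfg := by
    obtain ⟨Z, p, hp⟩ := hgen X
    have h : adj.homEquiv Z Y (p ≫ f) = adj.homEquiv Z Y (p ≫ g) := by
      rw [← cancel_mono (R.map (adj.unit.app Y)), ← adj.homEquiv_naturality_right,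
        ← adj.homEquiv_naturality_right, Category.assoc, Category.assoc, hfg]
    exact (cancel_epi p).1 ((adj.homEquiv Z Y).injective h)

end CategoryTheory.Adjunction

theorem nakayama_P_faithful_general {A : Type*} [Category A]
    (P ν : A ⥤ A)
    (hgen : ∀ X : A, ∃ (Y : A) (p : P.obj Y ⟶ X), Epi p)
    (adjP : P ⊣ (P ⋙ ν)) :
    P.Faithful :=
  have := adjP.mono_unit_app_of_generating hgen adjP.mono_map_unit_app_of_right_eq_comp
  adjP.faithful_L_of_mono_unit_app

/-- Let `P : A ⥤ A` be a generating endofunctor of an abelian category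
with a Nakayama functor `ν` relative to `P` (i.e. `ν ⊣ ν⁻`, `I = ν ∘ P` is right
adjoint to `P`, and the unit of `ν ⊣ ν⁻` is invertible on the image of `P`).
Then `P` is faithful. -/
theorem nakayama_P_faithful {A : Type*} [Category A] [Abelian A]
    (P ν νinv : A ⥤ A)
    (hgen : ∀ X : A, ∃ (Y : A) (p : P.obj Y ⟶ X), Epi p)
    (adjν : ν ⊣ νinv)
    (adjP : P ⊣ (P ⋙ ν))
    (hunit : ∀ X : A, IsIso (adjν.unit.app (P.obj X))) :
    P.Faithful :=
  nakayama_P_faithful_general P ν hgen adjP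
end

section
/- Let P : A ⥤ A be generating with Nakayama functor ν, ν⁻, I = ν∘P. If A ∈ A is Gorenstein P-projective, then ν(A) is Gorenstein I-injective, and the unit λ_A : A → ν⁻ν(A) is an isomorphism. Dually, if A is Gorenstein I-injective then ν⁻(A) is Gorenstein P-projective and the counit σ_A : νν⁻(A) → A is an isomorphism. Consequently ν restricts to an equivalence between the full subcategory of Gorenstein P-projective objects and the full subcategory of Gorenstein I-injective objects, with quasi-inverse ν⁻. -/
open CategoryTheory Category Limits

namespace GorensteinAux

universe v u

variable {A : Type u} [Category.{v} A] [Abelian A]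

/-- A comparison map between two kernel forks of the same morphism is an isomorphism. -/
lemma isIso_of_comparison {X₁ X₂ Y Z : A} {f : Y ⟶ Z}
    {ι₁ : X₁ ⟶ Y} {ι₂ : X₂ ⟶ Y} {w₁ : ι₁ ≫ f = 0} {w₂ : ι₂ ≫ f = 0}
    (h₁ : IsLimit (KernelFork.ofι ι₁ w₁)) (h₂ : IsLimit (KernelFork.ofι ι₂ w₂))
    (φ : X₁ ⟶ X₂) (hφ : φ ≫ ι₂ = ι₁) : IsIso φ := by
  let ψ : X₂ ⟶ X₁ := h₁.lift (KernelFork.ofι ι₂ w₂)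
  have hψ : ψ ≫ ι₁ = ι₂ := Fork.IsLimit.lift_ι h₁
  refine ⟨⟨ψ, ?_, ?_⟩⟩
  · refine Fork.IsLimit.hom_ext h₁ ?_
    show (φ ≫ ψ) ≫ ι₁ = 𝟙 X₁ ≫ ι₁
    rw [assoc, hψ, hφ, id_comp]
  · refine Fork.IsLimit.hom_ext h₂ ?_
    show (ψ ≫ φ) ≫ ι₂ = 𝟙 X₂ ≫ ι₂
    rw [assoc, hφ, hψ, id_comp]

/-- Transport a kernel along a commuting square of isomorphisms. -/
noncomputable def isLimit_conj {X Y X' Y' K : A} {f : X ⟶ Y} {f' : X' ⟶ Y'}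
    (a : X ≅ X') (b : Y ≅ Y') (sq : f ≫ b.hom = a.hom ≫ f')
    {ι : K ⟶ X} {wι : ι ≫ f = 0} (h : IsLimit (KernelFork.ofι ι wι))
    (w' : (ι ≫ a.hom) ≫ f' = 0) :
    IsLimit (KernelFork.ofι (ι ≫ a.hom) w') := by
  have hinv : a.inv ≫ f = f' ≫ b.inv := by
    rw [Iso.eq_comp_inv, assoc, sq, ← assoc, Iso.inv_hom_id, id_comp]
  have key : ∀ {W : A} (g : W ⟶ X'), g ≫ f' = 0 → (g ≫ a.inv) ≫ f = 0 := by
    intro W g hg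
    rw [assoc, hinv, ← assoc, hg, zero_comp]
  refine KernelFork.IsLimit.ofι _ _
    (fun g hg => h.lift (KernelFork.ofι (g ≫ a.inv) (key g hg))) ?_ ?_
  · intro W g hg
    have hl : h.lift (KernelFork.ofι (g ≫ a.inv) (key g hg)) ≫ ι = g ≫ a.inv :=
      Fork.IsLimit.lift_ι h
    rw [← assoc, hl, assoc, Iso.inv_hom_id, comp_id]
  · intro W g hg m hm
    apply Fork.IsLimit.hom_ext h
    have hl : h.lift (KernelFork.ofι (g ≫ a.inv) (key g hg)) ≫ ι = g ≫ a.inv :=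
      Fork.IsLimit.lift_ι h
    show m ≫ ι = _ ≫ ι
    rw [hl, ← hm, assoc, assoc, Iso.hom_inv_id, comp_id]

/-- A left adjoint sends the kernel of an exact complex (which stays exact) to
the kernel of the image complex. -/
noncomputable def map_kernel_isLimit {F G : A ⥤ A} (adj : F ⊣ G)
    {Q₂ Q₁ Q₀ Qm : A} (f₂ : Q₂ ⟶ Q₁) (f₁ : Q₁ ⟶ Q₀) (f₀ : Q₀ ⟶ Qm)
    (w₂ : f₂ ≫ f₁ = 0) (w₁ : f₁ ≫ f₀ = 0)
    (h₂ : (ShortComplex.mk f₂ f₁ w₂).Exact) (h₁ : (ShortComplex.mk f₁ f₀ w₁).Exact)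
    (wF₂ : F.map f₂ ≫ F.map f₁ = 0) (wF₁ : F.map f₁ ≫ F.map f₀ = 0)
    (hF₂ : (ShortComplex.mk (F.map f₂) (F.map f₁) wF₂).Exact)
    (hF₁ : (ShortComplex.mk (F.map f₁) (F.map f₀) wF₁).Exact)
    {X : A} {ι : X ⟶ Q₀} (wι : ι ≫ f₀ = 0) (h : IsLimit (KernelFork.ofι ι wι))
    (wFι : F.map ι ≫ F.map f₀ = 0) :
    IsLimit (KernelFork.ofι (F.map ι) wFι) := by
  haveI := adj.isLeftAdjoint
  haveI : PreservesColimitsOfSize.{0,0} F := adj.leftAdjoint_preservesColimits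
  haveI hmono : Mono ι := mono_of_isLimit_fork h
  -- the epimorphism `e : Q₁ ⟶ X`
  let e : Q₁ ⟶ X := h.lift (KernelFork.ofι f₁ w₁)
  have he : e ≫ ι = f₁ := Fork.IsLimit.lift_ι h
  have hepi : Epi e := by
    have h' : Epi (kernel.lift f₀ f₁ w₁) :=
      (ShortComplex.exact_iff_epi_kernel_lift _).1 h₁
    let φ := IsLimit.conePointUniqueUpToIso h (kernelIsKernel f₀)
    have hφ : φ.hom ≫ kernel.ι f₀ = ι := by
      simpa using IsLimit.conePointUniqueUpToIso_hom_comp h (kernelIsKernel f₀)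
        WalkingParallelPair.zero
    have heq : kernel.lift f₀ f₁ w₁ = e ≫ φ.hom := by
      rw [← cancel_mono (kernel.ι f₀), kernel.lift_ι, assoc, hφ, he]
    rw [heq] at h'
    have he2 : e = (e ≫ φ.hom) ≫ φ.inv := by simp
    rw [he2]
    haveI := h'
    exact epi_comp _ _
  haveI := hepi
  have w₂e : f₂ ≫ e = 0 := by
    rw [← cancel_mono ι, assoc, he, w₂, zero_comp]
  have hex_e : (ShortComplex.mk f₂ e w₂e).Exact := by
    let φ2 : ShortComplex.mk f₂ e w₂e ⟶ ShortComplex.mk f₂ f₁ w₂ :=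
      ShortComplex.homMk (𝟙 _) (𝟙 _) ι (by simp) (by simpa using he.symm)
    haveI : Epi φ2.τ₁ := by rw [show φ2.τ₁ = 𝟙 _ from rfl]; infer_instance
    haveI : IsIso φ2.τ₂ := by rw [show φ2.τ₂ = 𝟙 _ from rfl]; infer_instance
    haveI : Mono φ2.τ₃ := by rw [show φ2.τ₃ = ι from rfl]; infer_instance
    exact (ShortComplex.exact_iff_of_epi_of_isIso_of_mono φ2).2 h₂
  have hcoker : IsColimit (CokernelCofork.ofπ e w₂e) := hex_e.gIsCokernel
  have wFe : F.map f₂ ≫ F.map e = 0 := by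
    rw [← F.map_comp, w₂e, F.map_zero]
  have hcokerF : IsColimit (CokernelCofork.ofπ (F.map e) wFe) :=
    isColimitCoforkMapOfIsColimit' F w₂e hcoker
  haveI hepiF : Epi (F.map e) := epi_of_isColimit_cofork hcokerF
  have hFe : F.map e ≫ F.map ι = F.map f₁ := by rw [← F.map_comp, he]
  have hexFι : (ShortComplex.mk (F.map ι) (F.map f₀) wFι).Exact := by
    let φ3 : ShortComplex.mk (F.map f₁) (F.map f₀) wF₁ ⟶
        ShortComplex.mk (F.map ι) (F.map f₀) wFι :=
      ShortComplex.homMk (F.map e) (𝟙 _) (𝟙 _) (by simpa using hFe) (by simp)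
    haveI : Epi φ3.τ₁ := by rw [show φ3.τ₁ = F.map e from rfl]; infer_instance
    haveI : IsIso φ3.τ₂ := by rw [show φ3.τ₂ = 𝟙 _ from rfl]; infer_instance
    haveI : Mono φ3.τ₃ := by rw [show φ3.τ₃ = 𝟙 _ from rfl]; infer_instance
    exact (ShortComplex.exact_iff_of_epi_of_isIso_of_mono φ3).1 hF₁
  haveI : Mono (F.map ι) := by
    have hmonoDesc : Mono (cokernel.desc (F.map f₂) (F.map f₁) wF₂) :=
      (ShortComplex.exact_iff_mono_cokernel_desc _).1 hF₂
    let ψ : cokernel (F.map f₂) ≅ F.obj X :=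
      IsColimit.coconePointUniqueUpToIso (cokernelIsCokernel (F.map f₂)) hcokerF
    have hψ : cokernel.π (F.map f₂) ≫ ψ.hom = F.map e :=
      IsColimit.comp_coconePointUniqueUpToIso_hom (cokernelIsCokernel (F.map f₂)) hcokerF
        WalkingParallelPair.one
    have heq : F.map ι = ψ.inv ≫ cokernel.desc (F.map f₂) (F.map f₁) wF₂ := by
      rw [Iso.eq_inv_comp, ← cancel_epi (cokernel.π (F.map f₂)), ← assoc, hψ, hFe,
        cokernel.π_desc]
    rw [heq]
    exact mono_comp _ _
  exact hexFι.fIsKernel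

end GorensteinAux

open GorensteinAux

section

variable {A : Type*} [Category A] [Abelian A]

/-- An object `X` is Gorenstein `P`-projective if it is the kernel `Z₀ = Ker s₀` of an
exact complex `⋯ → P(B₁) → P(B₀) → P(B₋₁) → ⋯` with components in the image of `P`
which remains exact after applying `ν`. -/
def IsGorensteinPProj (P ν : A ⥤ A) (X : A) : Prop :=
  ∃ (B : ℤ → A) (d : ∀ i : ℤ, P.obj (B i) ⟶ P.obj (B (i - 1)))
    (w : ∀ i : ℤ, d i ≫ d (i - 1) = 0)
    (wν : ∀ i : ℤ, ν.map (d i) ≫ ν.map (d (i - 1)) = 0),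
    (∀ i : ℤ, (ShortComplex.mk (d i) (d (i - 1)) (w i)).Exact) ∧
    (∀ i : ℤ, (ShortComplex.mk (ν.map (d i)) (ν.map (d (i - 1))) (wν i)).Exact) ∧
    ∃ (ι : X ⟶ P.obj (B 0)) (wι : ι ≫ d 0 = 0),
      Nonempty (IsLimit (KernelFork.ofι ι wι))

/-- An object `X` is Gorenstein `I`-injective if it is the kernel `Z₀ = Ker g₀` of an
exact complex with components in the image of `I` which remains exact after applying
`ν⁻`. -/
def IsGorensteinIInj (I νinv : A ⥤ A) (X : A) : Prop :=
  ∃ (B : ℤ → A) (d : ∀ i : ℤ, I.obj (B i) ⟶ I.obj (B (i - 1)))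
    (w : ∀ i : ℤ, d i ≫ d (i - 1) = 0)
    (wν : ∀ i : ℤ, νinv.map (d i) ≫ νinv.map (d (i - 1)) = 0),
    (∀ i : ℤ, (ShortComplex.mk (d i) (d (i - 1)) (w i)).Exact) ∧
    (∀ i : ℤ, (ShortComplex.mk (νinv.map (d i)) (νinv.map (d (i - 1))) (wν i)).Exact) ∧
    ∃ (ι : X ⟶ I.obj (B 0)) (wι : ι ≫ d 0 = 0),
      Nonempty (IsLimit (KernelFork.ofι ι wι))

/-- Let `P` be generating with Nakayama functor `ν`, `ν⁻`, and
`I = ν ∘ P`.  If `X` is Gorenstein `P`-projective then `ν(X)` is Gorenstein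
`I`-injective and the unit `λ_X : X ⟶ ν⁻ν(X)` is an isomorphism; dually, if `X`
is Gorenstein `I`-injective then `ν⁻(X)` is Gorenstein `P`-projective and the
counit `σ_X : νν⁻(X) ⟶ X` is an isomorphism.  Consequently `ν` restricts to an
equivalence between Gorenstein `P`-projectives and Gorenstein `I`-injectives with
quasi-inverse `ν⁻`. -/
theorem gorenstein_proj_inj_equivalence
    (P ν νinv : A ⥤ A)
    (hgen : ∀ X : A, ∃ (Y : A) (p : P.obj Y ⟶ X), Epi p)
    (adjν : ν ⊣ νinv)
    (adjP : P ⊣ (P ⋙ ν))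
    (hunit : ∀ X : A, IsIso (adjν.unit.app (P.obj X))) :
    (∀ X : A, IsGorensteinPProj P ν X →
      IsGorensteinIInj (P ⋙ ν) νinv (ν.obj X) ∧ IsIso (adjν.unit.app X)) ∧
    (∀ X : A, IsGorensteinIInj (P ⋙ ν) νinv X →
      IsGorensteinPProj P ν (νinv.obj X) ∧ IsIso (adjν.counit.app X)) := by
  haveI := adjν.isLeftAdjoint
  haveI := adjν.isRightAdjoint
  haveI : PreservesLimitsOfSize.{0,0} νinv := adjν.rightAdjoint_preservesLimits
  haveI : ν.PreservesZeroMorphisms := inferInstance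
  haveI : νinv.PreservesZeroMorphisms := inferInstance
  constructor
  · -- Part 1
    intro X hX
    obtain ⟨B, d, w, wν, hex, hexν, ι, wι, ⟨hlim⟩⟩ := hX
    have wνinv : ∀ i : ℤ, νinv.map (ν.map (d i)) ≫ νinv.map (ν.map (d (i-1))) = 0 :=
      fun i => by rw [← νinv.map_comp, wν i, νinv.map_zero]
    have hexνinv : ∀ i : ℤ,
        (ShortComplex.mk (νinv.map (ν.map (d i))) (νinv.map (ν.map (d (i-1))))
          (wνinv i)).Exact := by
      intro i
      haveI := hunit (B i); haveI := hunit (B (i-1)); haveI := hunit (B (i-1-1))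
      have e : ShortComplex.mk (d i) (d (i-1)) (w i) ≅
          ShortComplex.mk (νinv.map (ν.map (d i))) (νinv.map (ν.map (d (i-1)))) (wνinv i) :=
        ShortComplex.isoMk (asIso (adjν.unit.app (P.obj (B i))))
          (asIso (adjν.unit.app (P.obj (B (i-1)))))
          (asIso (adjν.unit.app (P.obj (B (i-1-1)))))
          ((adjν.unit.naturality (d i)).symm) ((adjν.unit.naturality (d (i-1))).symm)
      exact ShortComplex.exact_of_iso e (hex i)
    have wι' : ν.map ι ≫ ν.map (d 0) = 0 := by rw [← ν.map_comp, wι, ν.map_zero]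
    have hν0 : IsLimit (KernelFork.ofι (ν.map ι) wι') := by
      have e2 : (ShortComplex.mk (d 2) (d 1) (w 2)).Exact := hex 2
      have e1 : (ShortComplex.mk (d 1) (d 0) (w 1)).Exact := hex 1
      have f2 : (ShortComplex.mk (ν.map (d 2)) (ν.map (d 1)) (wν 2)).Exact := hexν 2
      have f1 : (ShortComplex.mk (ν.map (d 1)) (ν.map (d 0)) (wν 1)).Exact := hexν 1
      exact map_kernel_isLimit adjν (d 2) (d 1) (d 0) (w 2) (w 1) e2 e1
        (wν 2) (wν 1) f2 f1 wι hlim wι'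
    refine ⟨⟨B, fun i => ν.map (d i), wν, wνinv, hexν, hexνinv, ν.map ι, wι', ⟨hν0⟩⟩, ?_⟩
    -- the unit is an isomorphism
    haveI := hunit (B 0); haveI := hunit (B (0-1))
    have wι2 : νinv.map (ν.map ι) ≫ νinv.map (ν.map (d 0)) = 0 := by
      rw [← νinv.map_comp, wι', νinv.map_zero]
    have h1 : IsLimit (KernelFork.ofι (νinv.map (ν.map ι)) wι2) :=
      isLimitForkMapOfIsLimit' νinv wι' hν0
    have sq : d 0 ≫ adjν.unit.app (P.obj (B (0-1))) =
        adjν.unit.app (P.obj (B 0)) ≫ νinv.map (ν.map (d 0)) := adjν.unit.naturality (d 0)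
    have w2' : (ι ≫ adjν.unit.app (P.obj (B 0))) ≫ νinv.map (ν.map (d 0)) = 0 := by
      rw [assoc, ← sq, ← assoc, wι, zero_comp]
    have h2 : IsLimit (KernelFork.ofι (ι ≫ adjν.unit.app (P.obj (B 0))) w2') :=
      isLimit_conj (asIso (adjν.unit.app (P.obj (B 0))))
        (asIso (adjν.unit.app (P.obj (B (0-1))))) sq hlim w2'
    exact isIso_of_comparison h2 h1 (adjν.unit.app X) (adjν.unit.naturality ι).symm
  · -- Part 2
    intro X hX
    obtain ⟨B, d, w, wνinv, hex, hexνinv, ι, wι, ⟨hlim⟩⟩ := hX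
    haveI : ∀ i : ℤ, IsIso (adjν.unit.app (P.obj (B i))) := fun i => hunit (B i)
    set d2 : ∀ i : ℤ, P.obj (B i) ⟶ P.obj (B (i-1)) := fun i =>
      adjν.unit.app (P.obj (B i)) ≫ νinv.map (d i) ≫ inv (adjν.unit.app (P.obj (B (i-1))))
      with hd2
    have hεinv : ∀ Y : A, inv (ν.map (adjν.unit.app (P.obj Y))) =
        adjν.counit.app (ν.obj (P.obj Y)) := fun Y => by
      haveI := hunit Y
      exact IsIso.inv_eq_of_hom_inv_id (adjν.left_triangle_components (P.obj Y))
    have hν : ∀ i : ℤ, ν.map (d2 i) = d i := by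
      intro i
      have hnat : ν.map (νinv.map (d i)) ≫ adjν.counit.app (ν.obj (P.obj (B (i-1)))) =
          adjν.counit.app (ν.obj (P.obj (B i))) ≫ d i := adjν.counit.naturality (d i)
      have htri : ν.map (adjν.unit.app (P.obj (B i))) ≫
          adjν.counit.app (ν.obj (P.obj (B i))) = 𝟙 _ :=
        adjν.left_triangle_components (P.obj (B i))
      rw [hd2]
      simp only [Functor.map_comp, Functor.map_inv, hεinv (B (i-1))]
      rw [hnat, ← assoc, htri]
      exact id_comp _
    have w2 : ∀ i : ℤ, d2 i ≫ d2 (i-1) = 0 := by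
      intro i
      rw [hd2]
      simp only [assoc, IsIso.inv_hom_id_assoc]
      rw [reassoc_of% (wνinv i)]
      simp
    have wν2 : ∀ i : ℤ, ν.map (d2 i) ≫ ν.map (d2 (i-1)) = 0 := by
      intro i; rw [hν i, hν (i-1)]; exact w i
    have hexd2 : ∀ i : ℤ, (ShortComplex.mk (d2 i) (d2 (i-1)) (w2 i)).Exact := by
      intro i
      have e : ShortComplex.mk (νinv.map (d i)) (νinv.map (d (i-1))) (wνinv i) ≅
          ShortComplex.mk (d2 i) (d2 (i-1)) (w2 i) :=
        ShortComplex.isoMk (asIso (adjν.unit.app (P.obj (B i)))).symm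
          (asIso (adjν.unit.app (P.obj (B (i-1))))).symm
          (asIso (adjν.unit.app (P.obj (B (i-1-1))))).symm
          (by show inv (adjν.unit.app (P.obj (B i))) ≫ d2 i =
                νinv.map (d i) ≫ inv (adjν.unit.app (P.obj (B (i-1))))
              rw [hd2]; simp)
          (by show inv (adjν.unit.app (P.obj (B (i-1)))) ≫ d2 (i-1) =
                νinv.map (d (i-1)) ≫ inv (adjν.unit.app (P.obj (B (i-1-1))))
              rw [hd2]; simp)
      exact ShortComplex.exact_of_iso e (hexνinv i)
    have hexν2 : ∀ i : ℤ, (ShortComplex.mk (ν.map (d2 i)) (ν.map (d2 (i-1))) (wν2 i)).Exact := by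
      intro i
      have e : ShortComplex.mk (d i) (d (i-1)) (w i) ≅
          ShortComplex.mk (ν.map (d2 i)) (ν.map (d2 (i-1))) (wν2 i) :=
        ShortComplex.isoMk (Iso.refl _) (Iso.refl _) (Iso.refl _)
          (by show 𝟙 _ ≫ ν.map (d2 i) = d i ≫ 𝟙 _
              rw [hν i]; exact (id_comp _).trans (comp_id _).symm)
          (by show 𝟙 _ ≫ ν.map (d2 (i-1)) = d (i-1) ≫ 𝟙 _
              rw [hν (i-1)]; exact (id_comp _).trans (comp_id _).symm)
      exact ShortComplex.exact_of_iso e (hex i)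
    -- the kernel map for νinv X
    have wk : νinv.map ι ≫ νinv.map (d 0) = 0 := by rw [← νinv.map_comp, wι, νinv.map_zero]
    have hk1 : IsLimit (KernelFork.ofι (νinv.map ι) wk) :=
      isLimitForkMapOfIsLimit' νinv wι hlim
    have sq2 : νinv.map (d 0) ≫ inv (adjν.unit.app (P.obj (B (0-1)))) =
        inv (adjν.unit.app (P.obj (B 0))) ≫ d2 0 := by
      rw [hd2]; simp
    have wι2 : (νinv.map ι ≫ inv (adjν.unit.app (P.obj (B 0)))) ≫ d2 0 = 0 := by
      rw [assoc, ← sq2, ← assoc, wk, zero_comp]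
    have hk2 : IsLimit (KernelFork.ofι (νinv.map ι ≫ inv (adjν.unit.app (P.obj (B 0)))) wι2) :=
      isLimit_conj (asIso (adjν.unit.app (P.obj (B 0)))).symm
        (asIso (adjν.unit.app (P.obj (B (0-1))))).symm sq2 hk1 wι2
    refine ⟨⟨B, d2, w2, wν2, hexd2, hexν2, νinv.map ι ≫ inv (adjν.unit.app (P.obj (B 0))),
      wι2, ⟨hk2⟩⟩, ?_⟩
    -- the counit is an isomorphism
    have wν_ι : ν.map (νinv.map ι ≫ inv (adjν.unit.app (P.obj (B 0)))) ≫ ν.map (d2 0) = 0 := by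
      rw [← ν.map_comp, wι2, ν.map_zero]
    have hk3 : IsLimit (KernelFork.ofι
        (ν.map (νinv.map ι ≫ inv (adjν.unit.app (P.obj (B 0))))) wν_ι) := by
      have e2 : (ShortComplex.mk (d2 2) (d2 1) (w2 2)).Exact := hexd2 2
      have e1 : (ShortComplex.mk (d2 1) (d2 0) (w2 1)).Exact := hexd2 1
      have f2 : (ShortComplex.mk (ν.map (d2 2)) (ν.map (d2 1)) (wν2 2)).Exact := hexν2 2
      have f1 : (ShortComplex.mk (ν.map (d2 1)) (ν.map (d2 0)) (wν2 1)).Exact := hexν2 1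
      exact map_kernel_isLimit adjν (d2 2) (d2 1) (d2 0) (w2 2) (w2 1) e2 e1
        (wν2 2) (wν2 1) f2 f1 wι2 hk2 wν_ι
    -- transport along ν.map (d2 0) = d 0
    have sq3 : ν.map (d2 0) ≫ 𝟙 ((P ⋙ ν).obj (B (0-1))) =
        𝟙 (ν.obj (P.obj (B 0))) ≫ d 0 := by
      rw [hν 0]
      exact (comp_id _).trans (id_comp _).symm
    have wι4 : ((ν.map (νinv.map ι ≫ inv (adjν.unit.app (P.obj (B 0))))) ≫
        𝟙 ((P ⋙ ν).obj (B 0))) ≫ d 0 = 0 := by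
      have hc : ν.map (νinv.map ι ≫ inv (adjν.unit.app (P.obj (B 0)))) ≫
          𝟙 ((P ⋙ ν).obj (B 0)) = ν.map (νinv.map ι ≫ inv (adjν.unit.app (P.obj (B 0)))) :=
        comp_id _
      rw [hc, ← hν 0]
      exact wν_ι
    have hk4 : IsLimit (KernelFork.ofι ((ν.map (νinv.map ι ≫
        inv (adjν.unit.app (P.obj (B 0))))) ≫ (Iso.refl ((P ⋙ ν).obj (B 0))).hom) wι4) :=
      isLimit_conj (Iso.refl _) (Iso.refl _) sq3 hk3 wι4
    -- comparison
    have hnat2 : ν.map (νinv.map ι) ≫ adjν.counit.app (ν.obj (P.obj (B 0))) =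
        adjν.counit.app X ≫ ι := adjν.counit.naturality ι
    have hφ : adjν.counit.app X ≫ ι =
        (ν.map (νinv.map ι ≫ inv (adjν.unit.app (P.obj (B 0))))) ≫
          (Iso.refl ((P ⋙ ν).obj (B 0))).hom := by
      have h1 : ν.map (νinv.map ι ≫ inv (adjν.unit.app (P.obj (B 0)))) ≫
          (Iso.refl ((P ⋙ ν).obj (B 0))).hom =
          ν.map (νinv.map ι) ≫ ν.map (inv (adjν.unit.app (P.obj (B 0)))) := by
        rw [ν.map_comp]; exact comp_id _
      rw [h1, ν.map_inv, hεinv (B 0)]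
      exact hnat2.symm
    exact isIso_of_comparison hk4 hlim (adjν.counit.app X) hφ


end
end

section
/- Let P : A ⥤ A be generating with Nakayama functor ν and I = ν∘P. An object A ∈ A is isomorphic to ν(A') for some A' if and only if there exists an exact sequence J₀ → J₁ → A → 0 with J₀, J₁ I-injective (summands of objects I(B)). Dually, A ≅ ν⁻(A') for some A' iff there is an exact sequence 0 → A → Q₀ → Q₁ with Q₀, Q₁ P-projective. -/
/-!
`ν` is right exact and sends `P`-projectives to `I`-injectives, so it turns a presentation
`P(A₀) → P(A₁) → Y → 0` (which exists as `P` is generating) into an `I`-injective presentation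
of `ν(Y)`. Conversely the counit `νν⁻ → 𝟭` is invertible on `I`-injectives, so an `I`-injective
presentation `J₀ → J₁ → X → 0` gives `X ≅ coker f ≅ coker (νν⁻ f) ≅ ν(coker ν⁻ f)`.
Dually, the unit of `P ⊣ I` is a monomorphism because `P` is faithful, which yields `I`-injective
copresentations; the left exact `ν⁻` turns them into `P`-projective ones, and the unit
`𝟭 → ν⁻ν` is invertible on `P`-projectives.
-/

open CategoryTheory Category Limits

section

variable {A : Type*} [Category A] [Abelian A]

/-- An object is `P`-projective if it is a direct summand of an object `P(Y)`. -/
def IsPProjObj (P : A ⥤ A) (Q : A) : Prop :=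
  ∃ (Y : A) (i : Q ⟶ P.obj Y) (r : P.obj Y ⟶ Q), i ≫ r = 𝟙 Q

/-- An object is `I`-injective if it is a direct summand of an object `I(Y)`. -/
def IsIInjObj (I : A ⥤ A) (J : A) : Prop :=
  ∃ (Y : A) (i : J ⟶ I.obj Y) (r : I.obj Y ⟶ J), i ≫ r = 𝟙 J

section Presentations

variable {C : Type*} [Category C] [Abelian C] {D : Type*} [Category D] [Abelian D]

def IsPresentedBy (S : ObjectProperty C) (X : C) : Prop :=
  ∃ (J₀ J₁ : C) (f : J₀ ⟶ J₁) (g : J₁ ⟶ X) (w : f ≫ g = 0),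
    S J₀ ∧ S J₁ ∧ Epi g ∧ (ShortComplex.mk f g w).Exact

def IsCopresentedBy (S : ObjectProperty C) (X : C) : Prop :=
  ∃ (Q₀ Q₁ : C) (f : X ⟶ Q₀) (g : Q₀ ⟶ Q₁) (w : f ≫ g = 0),
    S Q₀ ∧ S Q₁ ∧ Mono f ∧ (ShortComplex.mk f g w).Exact

variable {S : ObjectProperty C} {T : ObjectProperty D} {X Y : C}

lemma isPresentedBy_of_forall_exists_epi (hS : ∀ X : C, ∃ (J : C) (p : J ⟶ X), S J ∧ Epi p)
    (X : C) : IsPresentedBy S X := by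
  obtain ⟨J₁, g, hJ₁, hg⟩ := hS X
  obtain ⟨J₀, q, hJ₀, hq⟩ := hS (kernel g)
  have w : (q ≫ kernel.ι g) ≫ g = 0 := by simp
  refine ⟨J₀, J₁, q ≫ kernel.ι g, g, w, hJ₀, hJ₁, hg, ?_⟩
  rw [ShortComplex.exact_iff_epi_kernel_lift]
  convert hq
  ext
  simp

lemma isCopresentedBy_of_forall_exists_mono (hS : ∀ X : C, ∃ (Q : C) (i : X ⟶ Q), S Q ∧ Mono i)
    (X : C) : IsCopresentedBy S X := by
  obtain ⟨Q₀, f, hQ₀, hf⟩ := hS X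
  obtain ⟨Q₁, j, hQ₁, hj⟩ := hS (cokernel f)
  have w : f ≫ cokernel.π f ≫ j = 0 := by simp
  refine ⟨Q₀, Q₁, f, cokernel.π f ≫ j, w, hQ₀, hQ₁, hf, ?_⟩
  rw [ShortComplex.exact_iff_mono_cokernel_desc]
  convert hj
  ext
  simp

lemma IsPresentedBy.of_iso (h : IsPresentedBy S X) (e : X ≅ Y) : IsPresentedBy S Y := by
  obtain ⟨J₀, J₁, f, g, w, hJ₀, hJ₁, hg, hex⟩ := h
  have w' : f ≫ g ≫ e.hom = 0 := by simp [reassoc_of% w]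
  refine ⟨J₀, J₁, f, g ≫ e.hom, w', hJ₀, hJ₁, epi_comp _ _, ?_⟩
  exact ShortComplex.exact_of_iso (ShortComplex.isoMk (S₁ := ShortComplex.mk f g w)
    (S₂ := ShortComplex.mk f (g ≫ e.hom) w') (Iso.refl _) (Iso.refl _) e (by simp) (by simp)) hex

lemma IsCopresentedBy.of_iso (h : IsCopresentedBy S X) (e : Y ≅ X) : IsCopresentedBy S Y := by
  obtain ⟨Q₀, Q₁, f, g, w, hQ₀, hQ₁, hf, hex⟩ := h
  have w' : (e.hom ≫ f) ≫ g = 0 := by simp [w]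
  refine ⟨Q₀, Q₁, e.hom ≫ f, g, w', hQ₀, hQ₁, mono_comp _ _, ?_⟩
  exact ShortComplex.exact_of_iso (ShortComplex.isoMk (S₁ := ShortComplex.mk f g w)
    (S₂ := ShortComplex.mk (e.hom ≫ f) g w') e.symm (Iso.refl _) (Iso.refl _) (by simp) (by simp))
    hex

lemma IsPresentedBy.map (h : IsPresentedBy S X) (F : C ⥤ D) [F.PreservesZeroMorphisms]
    [PreservesFiniteColimits F] (hST : ∀ J, S J → T (F.obj J)) : IsPresentedBy T (F.obj X) := by
  obtain ⟨J₀, J₁, f, g, w, hJ₀, hJ₁, hg, hex⟩ := h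
  refine ⟨_, _, F.map f, F.map g, by rw [← F.map_comp, w, F.map_zero], hST _ hJ₀, hST _ hJ₁,
    F.map_epi g, ?_⟩
  exact hex.map_of_epi_of_preservesCokernel F hg inferInstance

lemma IsCopresentedBy.map (h : IsCopresentedBy S X) (F : C ⥤ D) [F.PreservesZeroMorphisms]
    [PreservesFiniteLimits F] (hST : ∀ Q, S Q → T (F.obj Q)) : IsCopresentedBy T (F.obj X) := by
  obtain ⟨Q₀, Q₁, f, g, w, hQ₀, hQ₁, hf, hex⟩ := h
  refine ⟨_, _, F.map f, F.map g, by rw [← F.map_comp, w, F.map_zero], hST _ hQ₀, hST _ hQ₁,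
    F.map_mono f, ?_⟩
  exact hex.map_of_mono_of_preservesKernel F hf inferInstance

end Presentations

namespace CategoryTheory.Adjunction

variable {C : Type*} [Category C] {D : Type*} [Category D] {L : C ⥤ D} {R : D ⥤ C}

lemma isIso_counit_app_obj_of_isIso_unit_app (adj : L ⊣ R) (X : C) [IsIso (adj.unit.app X)] :
    IsIso (adj.counit.app (L.obj X)) :=
  have : IsIso (L.map (adj.unit.app X) ≫ adj.counit.app (L.obj X)) := by
    simpa using IsIso.id (L.obj X)
  IsIso.of_isIso_comp_left (L.map (adj.unit.app X)) _

lemma faithful_of_comp_of_forall_exists_epi {F H : C ⥤ C} (adj : F ⊣ F ⋙ H)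
    (hgen : ∀ X : C, ∃ (Y : C) (p : F.obj Y ⟶ X), Epi p) : F.Faithful where
  map_injective {Z N g₁ g₂} hFg := by
    obtain ⟨Y, t, ht⟩ := hgen Z
    -- the adjunct of `t ≫ g` is `adj.unit.app Y ≫ H.map (F.map t ≫ F.map g)`
    suffices t ≫ g₁ = t ≫ g₂ from cancel_epi t |>.mp this
    apply (adj.homEquiv Y N).injective
    simp [Adjunction.homEquiv_unit, hFg]

variable [Abelian C] [Abelian D]

lemma exists_iso_obj_of_isPresentedBy (adj : L ⊣ R) {S : ObjectProperty D}
    (hS : ∀ J, S J → IsIso (adj.counit.app J)) {X : D} (hX : IsPresentedBy S X) :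
    ∃ Y : C, Nonempty (X ≅ L.obj Y) := by
  obtain ⟨J₀, J₁, f, g, w, hJ₀, hJ₁, hg, hex⟩ := hX
  have := hS J₀ hJ₀
  have := hS J₁ hJ₁
  have := adj.leftAdjoint_preservesColimits
  refine ⟨cokernel (R.map f), ⟨?_⟩⟩
  calc X ≅ cokernel f := (colimit.isColimit _).coconePointUniqueUpToIso hex.gIsCokernel |>.symm
    _ ≅ cokernel (L.map (R.map f)) :=
      (cokernel.mapIso _ _ (asIso (adj.counit.app J₀)) (asIso (adj.counit.app J₁))
        (by simp)).symm
    _ ≅ L.obj (cokernel (R.map f)) := (PreservesCokernel.iso L _).symm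

lemma exists_iso_obj_of_isCopresentedBy (adj : L ⊣ R) {S : ObjectProperty C}
    (hS : ∀ Q, S Q → IsIso (adj.unit.app Q)) {X : C} (hX : IsCopresentedBy S X) :
    ∃ Y : D, Nonempty (X ≅ R.obj Y) := by
  obtain ⟨Q₀, Q₁, f, g, w, hQ₀, hQ₁, hf, hex⟩ := hX
  have := hS Q₀ hQ₀
  have := hS Q₁ hQ₁
  have := adj.rightAdjoint_preservesLimits
  refine ⟨kernel (L.map g), ⟨?_⟩⟩
  calc X ≅ kernel g := hex.fIsKernel.conePointUniqueUpToIso (limit.isLimit _)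
    _ ≅ kernel (R.map (L.map g)) :=
      kernel.mapIso _ _ (asIso (adj.unit.app Q₀)) (asIso (adj.unit.app Q₁)) (by simp)
    _ ≅ R.obj (kernel (L.map g)) := (PreservesKernel.iso R _).symm

end CategoryTheory.Adjunction

section Nakayama

variable {C : Type*} [Category C]

lemma isPProjObj_obj (P : C ⥤ C) (Y : C) : IsPProjObj P (P.obj Y) :=
  ⟨Y, 𝟙 _, 𝟙 _, comp_id _⟩

lemma isIInjObj_obj (I : C ⥤ C) (Y : C) : IsIInjObj I (I.obj Y) :=
  ⟨Y, 𝟙 _, 𝟙 _, comp_id _⟩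

lemma IsPProjObj.isIInjObj_map {P : C ⥤ C} (ν : C ⥤ C) {Q : C} (hQ : IsPProjObj P Q) :
    IsIInjObj (P ⋙ ν) (ν.obj Q) :=
  let ⟨Y, i, r, hir⟩ := hQ
  ⟨Y, ν.map i, ν.map r, by rw [← ν.map_comp, hir, ν.map_id]⟩

variable {P ν νinv : C ⥤ C}

variable (adj : ν ⊣ νinv) (hunit : ∀ X : C, IsIso (adj.unit.app (P.obj X)))
include hunit

lemma IsIInjObj.isPProjObj_map {J : C} (hJ : IsIInjObj (P ⋙ ν) J) : IsPProjObj P (νinv.obj J) :=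
  let ⟨Y, i, r, hir⟩ := hJ
  have := hunit Y
  ⟨Y, νinv.map i ≫ inv (adj.unit.app (P.obj Y)), adj.unit.app (P.obj Y) ≫ νinv.map r,
    by simp [← νinv.map_comp, hir]⟩

lemma IsPProjObj.isIso_unit_app {Q : C} (hQ : IsPProjObj P Q) : IsIso (adj.unit.app Q) :=
  let ⟨Y, i, r, hir⟩ := hQ
  MorphismProperty.of_retract (P := .isomorphisms C)
    (adj.unit.retractArrowApp ⟨i, r, hir⟩) (hunit Y)

lemma IsIInjObj.isIso_counit_app {J : C} (hJ : IsIInjObj (P ⋙ ν) J) : IsIso (adj.counit.app J) :=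
  let ⟨Y, i, r, hir⟩ := hJ
  have := hunit Y
  MorphismProperty.of_retract (P := .isomorphisms C)
    (adj.counit.retractArrowApp ⟨i, r, hir⟩)
    (adj.isIso_counit_app_obj_of_isIso_unit_app (P.obj Y))

end Nakayama

/-- Let `P` be generating with Nakayama functor `ν` and `I = ν ∘ P`.
An object `X` is isomorphic to `ν(A')` for some `A'` iff there is an exact sequence
`J₀ → J₁ → X → 0` with `J₀, J₁` `I`-injective; dually, `X ≅ ν⁻(A')` for some `A'`
iff there is an exact sequence `0 → X → Q₀ → Q₁` with `Q₀, Q₁` `P`-projective. -/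
theorem image_nu_characterization
    (P ν νinv : A ⥤ A)
    (hgen : ∀ X : A, ∃ (Y : A) (p : P.obj Y ⟶ X), Epi p)
    (adjν : ν ⊣ νinv)
    (adjP : P ⊣ (P ⋙ ν))
    (hunit : ∀ X : A, IsIso (adjν.unit.app (P.obj X)))
    (X : A) :
    ((∃ Y : A, Nonempty (X ≅ ν.obj Y)) ↔
      ∃ (J₀ J₁ : A) (f : J₀ ⟶ J₁) (g : J₁ ⟶ X) (w : f ≫ g = 0),
        IsIInjObj (P ⋙ ν) J₀ ∧ IsIInjObj (P ⋙ ν) J₁ ∧ Epi g ∧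
        (ShortComplex.mk f g w).Exact) ∧
    ((∃ Y : A, Nonempty (X ≅ νinv.obj Y)) ↔
      ∃ (Q₀ Q₁ : A) (f : X ⟶ Q₀) (g : Q₀ ⟶ Q₁) (w : f ≫ g = 0),
        IsPProjObj P Q₀ ∧ IsPProjObj P Q₁ ∧ Mono f ∧
        (ShortComplex.mk f g w).Exact) := by
  have := adjν.leftAdjoint_preservesColimits
  have := adjν.rightAdjoint_preservesLimits
  have := adjP.faithful_of_comp_of_forall_exists_epi hgen
  refine ⟨⟨?_, adjν.exists_iso_obj_of_isPresentedBy fun J hJ => hJ.isIso_counit_app adjν hunit⟩,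
    ⟨?_, adjν.exists_iso_obj_of_isCopresentedBy fun Q hQ => hQ.isIso_unit_app adjν hunit⟩⟩
  · rintro ⟨Y, ⟨e⟩⟩
    have hY : IsPresentedBy (IsPProjObj P) Y := isPresentedBy_of_forall_exists_epi
      (fun Z => let ⟨W, p, hp⟩ := hgen Z; ⟨P.obj W, p, isPProjObj_obj P W, hp⟩) Y
    exact (hY.map ν fun Q hQ => hQ.isIInjObj_map ν).of_iso e.symm
  · rintro ⟨M, ⟨e⟩⟩
    have hM : IsCopresentedBy (IsIInjObj (P ⋙ ν)) M := isCopresentedBy_of_forall_exists_mono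
      (fun Z => ⟨_, adjP.unit.app Z, isIInjObj_obj (P ⋙ ν) (P.obj Z), inferInstance⟩) M
    exact (hM.map νinv fun J hJ => hJ.isPProjObj_map adjν hunit).of_iso e

end
end
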